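/- arXiv:1502.04741 — 2 statements merged into one kernel-verified Lean document; each statement's English description precedes it below -/
import Mathlib

section
/- Let F : C ⥤ C' be a target cover of categories. Then for every n ≥ 1, the commutative square whose horizontal maps are the 0th face maps of the nerves, d₀ : (nerve C)_n → (nerve C)_{n−1} and d₀ : (nerve C')_n → (nerve C')_{n−1} (the face map omitting vertex 0, which for n = 1 sends a morphism to its target), and whose vertical maps are induced by F on n-simplices and (n−1)-simplices, is a pullback square of types. -/
open CategoryTheory

/-- A functor is a target cover (discrete fibration) if, for every object `b` of the source,
`(a, f : a ⟶ b) ↦ (F.obj a, F.map f)` is a bijection onto pairs `(a', φ : a' ⟶ F.obj b)`. -/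
def IsTargetCover {C : Type*} {C' : Type*} [Category C] [Category C'] (F : C ⥤ C') : Prop :=
  ∀ b : C, Function.Bijective
    (fun p : Σ a : C, (a ⟶ b) => (⟨F.obj p.1, F.map p.2⟩ : Σ a' : C', (a' ⟶ F.obj b)))

/-- A commutative square of types which is a pullback square. -/
def IsPB {A : Type*} {B : Type*} {C : Type*} {Z : Type*}
    (f : A → B) (j : A → C) (h : B → Z) (k : C → Z) : Prop :=
  (∀ a, h (f a) = k (j a)) ∧ ∀ (b : B) (c : C), h b = k c → ∃! a : A, f a = b ∧ j a = c

/-- The map induced by a functor `F` on the `m`-simplices of the nerves. -/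
def nerveWhisker {C : Type*} {C' : Type*} [Category C] [Category C'] (F : C ⥤ C') (m : ℕ) :
    (nerve C).obj (Opposite.op (SimplexCategory.mk m)) →
      (nerve C').obj (Opposite.op (SimplexCategory.mk m)) :=
  fun X => X ⋙ F

/-! An `(n+1)`-simplex of a nerve is an `n`-simplex `b` together with an arrow into its first
vertex `b₀` (`ComposableArrows.precomp`), and `d₀` forgets that arrow. Applying `F` commutes with
this decomposition, so the fibre of `d₀` over `b` maps to the fibre over `F b` as
`Σ a, a ⟶ b₀` maps to `Σ a', a' ⟶ F b₀`, which is a bijection for a target cover. -/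

namespace CategoryTheory.ComposableArrows

variable {D : Type*} [Category D] {n : ℕ}

lemma precomp_comp_functor {E : Type*} [Category E] (G : D ⥤ E) (y : ComposableArrows D n)
    {X : D} (f : X ⟶ y.left) : y.precomp f ⋙ G = precomp (y ⋙ G) (G.map f) :=
  ext_succ rfl rfl (by erw [Category.id_comp, Category.comp_id]; rfl)

lemma exists_eq_precomp_of_δ₀_eq {x : ComposableArrows D (n + 1)} {y : ComposableArrows D n}
    (h : x.δ₀ = y) : ∃ p : Σ X, X ⟶ y.left, x = y.precomp p.2 := by
  obtain ⟨y₀, X, f, rfl⟩ := x.precomp_surjective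
  subst h
  exact ⟨⟨X, f⟩, rfl⟩

lemma precomp_sigma_injective (y : ComposableArrows D n) :
    Function.Injective (fun p : Σ X, X ⟶ y.left => y.precomp p.2) := fun _ _ h =>
  Sigma.ext (congrArg (fun z => z.obj 0) h)
    (congr_arg_heq (fun z : ComposableArrows D (n + 1) => z.map' 0 1) h)

end CategoryTheory.ComposableArrows

open ComposableArrows in
theorem IsTargetCover.existsUnique_δ₀_eq_and_comp_eq {C C' : Type*} [Category C] [Category C']
    {F : C ⥤ C'} (hF : IsTargetCover F) {n : ℕ} (b : ComposableArrows C n)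
    (c : ComposableArrows C' (n + 1)) (hc : c.δ₀ = b ⋙ F) :
    ∃! x : ComposableArrows C (n + 1), x.δ₀ = b ∧ x ⋙ F = c := by
  obtain ⟨⟨X, g⟩, rfl⟩ := exists_eq_precomp_of_δ₀_eq hc
  obtain ⟨⟨a, f⟩, hf⟩ := (hF b.left).surjective ⟨X, g⟩
  have hlift : b.precomp f ⋙ F = precomp (b ⋙ F) g := by
    rw [precomp_comp_functor]
    exact congrArg (fun p : Σ X, X ⟶ F.obj b.left => precomp (b ⋙ F) p.2) hf
  refine ⟨b.precomp f, ⟨rfl, hlift⟩, ?_⟩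
  rintro x ⟨hx, hxF⟩
  obtain ⟨⟨Y, u⟩, rfl⟩ := exists_eq_precomp_of_δ₀_eq hx
  have hu : (⟨Y, u⟩ : Σ Y, Y ⟶ b.left) = ⟨a, f⟩ := by
    refine (hF b.left).injective (precomp_sigma_injective (b ⋙ F) ?_)
    simp only [← precomp_comp_functor]
    exact hxF.trans hlift.symm
  exact congrArg (fun p : Σ Y, Y ⟶ b.left => b.precomp p.2) hu

/-- If `F : C ⥤ C'` is a target cover, then for every `n ≥ 1` the square formed by the
0th face maps `d₀` of the nerves and the maps induced by `F` on simplices is a pullback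
square of types. -/
theorem nerve_d0_pullback_of_targetCover
    {C : Type*} {C' : Type*} [Category C] [Category C'] (F : C ⥤ C')
    (hF : IsTargetCover F) (n : ℕ) :
    IsPB ((nerve C).map (SimplexCategory.δ (0 : Fin (n + 2))).op)
      (nerveWhisker F (n + 1)) (nerveWhisker F n)
      ((nerve C').map (SimplexCategory.δ (0 : Fin (n + 2))).op) :=
  ⟨fun _ => rfl, fun b c hc => hF.existsUnique_δ₀_eq_and_comp_eq b c hc.symm⟩
end

section
/- Let D : ℕ → Type be a family of types with, for each n, an action of Equiv.Perm (Fin n) on D n (no freeness assumed), and let 𝔻 be the associated endofunctor of types. Let f, g : A → B admit a common section s : B → A (f ∘ s = id and g ∘ s = id), and let h : B → C be a coequalizer of f and g in the category of types. Then 𝔻h : 𝔻B → 𝔻C is a coequalizer of 𝔻f, 𝔻g : 𝔻A → 𝔻B in the category of types, and 𝔻s is a common section of 𝔻f and 𝔻g. (The functor underlying the monad associated to an operad in Set preserves reflexive coequalizers.) -/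
/-- The relation on `D n × (Fin n → X)` identifying `(d, x)` with
`σ • (d, x) = (σ • d, x ∘ σ⁻¹)`. -/
def OpRel (D : ℕ → Type) [∀ n, MulAction (Equiv.Perm (Fin n)) (D n)] (X : Type) (n : ℕ)
    (p q : D n × (Fin n → X)) : Prop :=
  ∃ σ : Equiv.Perm (Fin n), σ • p.1 = q.1 ∧ p.2 ∘ σ.symm = q.2

/-- The endofunctor of types associated to a family `D` with symmetric group actions. -/
def DD (D : ℕ → Type) [∀ n, MulAction (Equiv.Perm (Fin n)) (D n)] (X : Type) : Type :=
  Σ n : ℕ, Quot (OpRel D X n)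

/-- The action of the endofunctor `𝔻` on functions, induced by `(d, x) ↦ (d, f ∘ x)`. -/
def DDmap (D : ℕ → Type) [∀ n, MulAction (Equiv.Perm (Fin n)) (D n)] {X Y : Type}
    (f : X → Y) : DD D X → DD D Y :=
  fun a => ⟨a.1, Quot.map (fun p => (p.1, f ∘ p.2))
    (fun p q hpq => by
      obtain ⟨σ, h1, h2⟩ := hpq
      exact ⟨σ, h1, congrArg (fun u => f ∘ u) h2⟩) a.2⟩

/-- `h : B → C` is a coequalizer of `f, g : A → B` in the category of types. -/
def IsCoeq {A B C : Type} (f g : A → B) (h : B → C) : Prop :=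
  h ∘ f = h ∘ g ∧ ∀ {W : Type} (q : B → W), q ∘ f = q ∘ g → ∃! q' : C → W, q' ∘ h = q
/-!
In `Type`, a coequalizer `h` of `f, g` is a surjection on whose fibres every map coequalizing
`f, g` is constant. If the pair is reflexive with section `s`, two tuples `x, x' : Fin n → B`
with `h ∘ x = h ∘ x'` can be joined by changing one coordinate at a time, and the coequalizer
property of `h` applies to each change: putting `f a` or `g a` in coordinate `i` of `x` gives
`f ∘ y` or `g ∘ y`, where `y` is `s ∘ x` with `a` in coordinate `i`. Hence a map out of `𝔻 B`
coequalizing `𝔻 f, 𝔻 g` only depends on `(d, h ∘ x)`; a section `t` of `h` gives the section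
`𝔻 t` of `𝔻 h`, through which the factorisation is built.
-/

open Function

section IsCoeq

variable {A B C : Type} {f g : A → B} {h : B → C}

theorem IsCoeq.surjective (hco : IsCoeq f g h) : Surjective h := by
  obtain ⟨p, -, hp⟩ := hco.2 (fun _ : B => True) rfl
  have hrange : (fun c => ∃ b, h b = c) = p := hp _ (funext fun b => eq_true ⟨b, rfl⟩)
  have htrue : (fun _ : C => True) = p := hp _ rfl
  intro c
  exact (congrFun (hrange.trans htrue.symm) c).mpr trivial

theorem IsCoeq.apply_eq_of_apply_eq (hco : IsCoeq f g h) {W : Type} {q : B → W}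
    (hq : q ∘ f = q ∘ g) {b b' : B} (hb : h b = h b') : q b = q b' := by
  obtain ⟨q', hq', -⟩ := hco.2 q hq
  rw [← hq', comp_apply, comp_apply, hb]

theorem isCoeq_iff : IsCoeq f g h ↔ Surjective h ∧ h ∘ f = h ∘ g ∧
    ∀ {W : Type} (q : B → W), q ∘ f = q ∘ g → ∀ b b', h b = h b' → q b = q b' := by
  refine ⟨fun hco => ⟨hco.surjective, hco.1, fun _ hq _ _ => hco.apply_eq_of_apply_eq hq⟩, ?_⟩
  rintro ⟨hsurj, hfg, hker⟩
  obtain ⟨t, ht⟩ := hsurj.hasRightInverse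
  refine ⟨hfg, fun q hq => ⟨q ∘ t, funext fun b => hker q hq _ _ (ht (h b)), ?_⟩⟩
  rintro q' rfl
  exact funext fun c => by rw [comp_apply, comp_apply, ht c]

variable {s : B → A} {ι W : Type} {Φ : (ι → B) → W}

theorem IsCoeq.apply_update_eq [DecidableEq ι] (hco : IsCoeq f g h) (hsf : f ∘ s = id)
    (hsg : g ∘ s = id) (hΦ : ∀ y : ι → A, Φ (f ∘ y) = Φ (g ∘ y)) (x : ι → B) (i : ι)
    {b b' : B} (hb : h b = h b') : Φ (update x i b) = Φ (update x i b') := by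
  refine hco.apply_eq_of_apply_eq (q := fun b => Φ (update x i b)) (funext fun a => ?_) hb
  have hlift : ∀ k : A → B, k ∘ s = id → k ∘ update (s ∘ x) i a = update x i (k a) := by
    intro k hk
    rw [comp_update, ← comp_assoc, hk, id_comp]
  simp only [comp_apply, ← hlift f hsf, ← hlift g hsg, hΦ]

theorem IsCoeq.pi_apply_eq_of_comp_eq [Fintype ι] [DecidableEq ι] (hco : IsCoeq f g h)
    (hsf : f ∘ s = id) (hsg : g ∘ s = id) (hΦ : ∀ y : ι → A, Φ (f ∘ y) = Φ (g ∘ y))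
    {x x' : ι → B} (hxx' : h ∘ x = h ∘ x') : Φ x = Φ x' := by
  suffices ∀ S : Finset ι, Φ x = Φ (S.piecewise x' x) by
    simpa only [Finset.piecewise_univ] using this Finset.univ
  intro S
  induction S using Finset.induction_on with
  | empty => rw [Finset.piecewise_empty]
  | insert i S hi ih =>
    rw [ih, Finset.piecewise_insert]
    conv_lhs => rw [← update_eq_self i (S.piecewise x' x)]
    refine hco.apply_update_eq hsf hsg hΦ _ i ?_
    rw [Finset.piecewise_eq_of_notMem _ _ _ hi]
    exact congrFun hxx' i

end IsCoeq

section DD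

variable (D : ℕ → Type) [∀ n, MulAction (Equiv.Perm (Fin n)) (D n)]

theorem DDmap_id {X : Type} : DDmap D (id : X → X) = id := by
  funext ⟨n, c⟩
  induction c using Quot.ind
  rfl

theorem DDmap_comp {X Y Z : Type} (v : Y → Z) (u : X → Y) :
    DDmap D (v ∘ u) = DDmap D v ∘ DDmap D u := by
  funext ⟨n, c⟩
  induction c using Quot.ind
  rfl

variable {D}

theorem DDmap_surjective {X Y : Type} {u : X → Y} (hu : Surjective u) :
    Surjective (DDmap D u) := by
  obtain ⟨t, ht⟩ := hu.hasRightInverse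
  have hsection : DDmap D u ∘ DDmap D t = id := by
    rw [← DDmap_comp, ht.comp_eq_id, DDmap_id]
  exact RightInverse.surjective (congrFun hsection)

theorem IsCoeq.DDmap_apply_eq {A B C W : Type} {f g : A → B} {s : B → A} {h : B → C}
    (hco : IsCoeq f g h) (hsf : f ∘ s = id) (hsg : g ∘ s = id) {Q : DD D B → W}
    (hQ : Q ∘ DDmap D f = Q ∘ DDmap D g) {a a' : DD D B} (haa' : DDmap D h a = DDmap D h a') :
    Q a = Q a' := by
  obtain ⟨t, ht⟩ := hco.surjective.hasRightInverse
  have hsection : ∀ a, Q (DDmap D t (DDmap D h a)) = Q a := by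
    rintro ⟨n, c⟩
    induction c using Quot.ind with
    | mk p =>
      obtain ⟨d, x⟩ := p
      exact hco.pi_apply_eq_of_comp_eq (Φ := fun x => Q ⟨n, Quot.mk _ (d, x)⟩) hsf hsg
        (fun y => congrFun hQ ⟨n, Quot.mk _ (d, y)⟩) (funext fun i => ht (h (x i)))
  rw [← hsection a, haa', hsection]

end DD

/-- The functor underlying the monad associated to an operad in `Set` preserves reflexive
coequalizers. -/
theorem DD_preserves_reflexive_coequalizers
    (D : ℕ → Type) [∀ n, MulAction (Equiv.Perm (Fin n)) (D n)]
    {A B C : Type} (f g : A → B) (s : B → A)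
    (hsf : f ∘ s = id) (hsg : g ∘ s = id)
    (h : B → C) (hco : IsCoeq f g h) :
    IsCoeq (DDmap D f) (DDmap D g) (DDmap D h) ∧
      DDmap D f ∘ DDmap D s = id ∧ DDmap D g ∘ DDmap D s = id := by
  refine ⟨isCoeq_iff.2 ⟨DDmap_surjective hco.surjective, ?_,
    fun _ hQ _ _ => hco.DDmap_apply_eq hsf hsg hQ⟩, ?_, ?_⟩
  · rw [← DDmap_comp, ← DDmap_comp, hco.1]
  · rw [← DDmap_comp, hsf, DDmap_id]
  · rw [← DDmap_comp, hsg, DDmap_id]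
end
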